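/- Let (λ_n)_{n≥1} be a strictly increasing sequence of positive reals and (a_n) a sequence with ∑ |a_n| < ∞. If ∑_{n=1}^∞ a_n (1 − e^{−λ_n t}) = 0 for all t in some interval (0, ε) with ε > 0, then a_n = 0 for every n. -/

import Mathlib

/-!
The series `G z = ∑ aₙ e^{-λₙ z}` is holomorphic on `Re z > 0` and equals `∑ aₙ` on `(0, ε)`,
hence on all of `(0, ∞)` by the identity theorem. Letting `t → ∞` (dominated convergence) gives
`∑ aₙ = 0`, so `∑ aₙ e^{-λₙ t}` vanishes for `t > 0`. Multiplying by `e^{λₙ t}` and letting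
`t → ∞` again isolates `aₙ` once the earlier coefficients are known to vanish.
-/

open Filter Topology Set

section RealExponents

variable {E : Type*} [NormedAddCommGroup E] [NormedSpace ℝ E]

theorem norm_exp_neg_mul_smul_le {μ t : ℝ} (hμ : 0 ≤ μ) (ht : 0 ≤ t) (x : E) :
    ‖Real.exp (-μ * t) • x‖ ≤ ‖x‖ := by
  rw [norm_smul, Real.norm_of_nonneg (Real.exp_pos _).le]
  exact mul_le_of_le_one_left (norm_nonneg x) (Real.exp_le_one_iff.mpr (by nlinarith))

variable [CompleteSpace E]

theorem tendsto_tsum_exp_neg_mul_smul_atTop {μ : ℕ → ℝ} {a : ℕ → E} (ha : Summable (‖a ·‖))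
    (hμ : ∀ n, a n ≠ 0 → 0 ≤ μ n) :
    Tendsto (fun t => ∑' n, Real.exp (-μ n * t) • a n) atTop
      (𝓝 (∑' n, if μ n = 0 then a n else 0)) := by
  refine tendsto_tsum_of_dominated_convergence ha (fun n => ?_) ?_
  · rcases eq_or_ne (a n) 0 with han | han
    · simp [han]
    rcases (hμ n han).eq_or_lt with h0 | hpos
    · simp [← h0]
    · rw [if_neg hpos.ne']
      have : Tendsto (fun t => -μ n * t) atTop atBot :=
        tendsto_id.const_mul_atTop_of_neg (neg_neg_iff_pos.mpr hpos)
      simpa using (Real.tendsto_exp_atBot.comp this).smul_const (a n)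
  · filter_upwards [eventually_ge_atTop 0] with t ht n
    rcases eq_or_ne (a n) 0 with han | han
    · simp [han]
    · exact norm_exp_neg_mul_smul_le (hμ n han) ht _

theorem eq_zero_of_tsum_exp_neg_mul_smul_eventually_eq_zero {lam : ℕ → ℝ} (hlam : StrictMono lam)
    {a : ℕ → E} (ha : Summable (‖a ·‖))
    (h : ∀ᶠ t in atTop, ∑' n, Real.exp (-lam n * t) • a n = 0) (n : ℕ) : a n = 0 := by
  refine Nat.strong_induction_on n fun n ih => ?_
  -- the terms before `n` vanish by induction and the later ones decay, leaving `a n` in the limit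
  have hshift : ∀ᶠ t in atTop, ∑' k, Real.exp (-(lam k - lam n) * t) • a k = 0 := by
    filter_upwards [h] with t ht
    have hk (k : ℕ) : Real.exp (-(lam k - lam n) * t) • a k
        = Real.exp (lam n * t) • Real.exp (-lam k * t) • a k := by
      rw [smul_smul, ← Real.exp_add]; ring_nf
    simp_rw [hk, tsum_const_smul'', ht, smul_zero]
  have hlim := tendsto_tsum_exp_neg_mul_smul_atTop (μ := fun k => lam k - lam n) ha fun k hk =>
    sub_nonneg.mpr (hlam.monotone (not_lt.mp fun hkn => hk (ih k hkn)))
  have hsingle : (∑' k, if lam k - lam n = 0 then a k else 0) = a n := by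
    simp_rw [sub_eq_zero, hlam.injective.eq_iff]
    exact (tsum_eq_single n fun k hk => if_neg hk).trans (if_pos rfl)
  rw [hsingle] at hlim
  exact tendsto_nhds_unique hlim (tendsto_const_nhds.congr' (hshift.mono fun t ht => ht.symm))

end RealExponents

section ComplexExponents

variable {F : Type*} [NormedAddCommGroup F] [NormedSpace ℂ F] [CompleteSpace F]

theorem differentiableOn_tsum_cexp_neg_mul_smul {lam : ℕ → ℝ} (hlam : ∀ n, 0 ≤ lam n)
    {a : ℕ → F} (ha : Summable (‖a ·‖)) :
    DifferentiableOn ℂ (fun z : ℂ => ∑' n, Complex.exp (-lam n * z) • a n) {z | 0 < z.re} := by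
  refine Complex.differentiableOn_tsum_of_summable_norm ha (fun n => by fun_prop)
    (isOpen_lt continuous_const Complex.continuous_re) fun n z hz => ?_
  have hre : (-(lam n : ℂ) * z).re = -lam n * z.re := by simp [Complex.mul_re]
  rw [norm_smul, Complex.norm_exp, hre]
  exact mul_le_of_le_one_left (norm_nonneg _)
    (Real.exp_le_one_iff.mpr (by nlinarith [hlam n, (show 0 < z.re from hz)]))

theorem eq_of_eqOn_Ioo_of_differentiableOn_re_pos {f : ℂ → F}
    (hf : DifferentiableOn ℂ f {z | 0 < z.re}) {ε : ℝ} (hε : 0 < ε) {c : F}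
    (h : ∀ t ∈ Ioo 0 ε, f t = c) {t : ℝ} (ht : 0 < t) : f t = c := by
  have hU : IsOpen {z : ℂ | 0 < z.re} := isOpen_lt continuous_const Complex.continuous_re
  have hfreq : ∃ᶠ z in 𝓝[≠] ((ε / 2 : ℝ) : ℂ), f z = c := by
    have hmap : Tendsto ((↑) : ℝ → ℂ) (𝓝[≠] (ε / 2)) (𝓝[≠] ((ε / 2 : ℝ) : ℂ)) :=
      Complex.continuous_ofReal.continuousWithinAt.tendsto_nhdsWithin
        fun _ => Complex.ofReal_injective.ne
    refine hmap.frequently (Eventually.frequently ?_)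
    filter_upwards [nhdsWithin_le_nhds (Ioo_mem_nhds (half_pos hε) (half_lt_self hε))] with s hs
    exact h s hs
  exact (hf.analyticOnNhd hU).eqOn_of_preconnected_of_frequently_eq analyticOnNhd_const
    (convex_halfSpace_re_gt 0).isPreconnected (by simpa using hε) hfreq
    (show 0 < (t : ℂ).re by simpa)

end ComplexExponents

theorem tsum_exp_neg_mul_smul_eq_of_eqOn_Ioo {lam a : ℕ → ℝ} (hlam : ∀ n, 0 ≤ lam n)
    (ha : Summable (‖a ·‖)) {ε c : ℝ} (hε : 0 < ε)
    (h : ∀ t ∈ Ioo 0 ε, ∑' n, Real.exp (-lam n * t) • a n = c) {t : ℝ} (ht : 0 < t) :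
    ∑' n, Real.exp (-lam n * t) • a n = c := by
  have hG (s : ℝ) : ∑' n, Complex.exp (-lam n * s) • (a n : ℂ)
      = ↑(∑' n, Real.exp (-lam n * s) • a n) := by
    rw [Complex.ofReal_tsum]
    push_cast [smul_eq_mul]
    rfl
  have := eq_of_eqOn_Ioo_of_differentiableOn_re_pos
    (differentiableOn_tsum_cexp_neg_mul_smul hlam (a := fun n => (a n : ℂ)) (by simpa using ha))
    hε (c := (c : ℂ)) (fun s hs => by rw [hG, h s hs]) ht
  exact_mod_cast (hG t).symm.trans this

/-- If `∑ aₙ (1 − e^{−λₙ t}) = 0` on an interval `(0, ε)` with `λₙ > 0` strictly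
increasing and `(aₙ)` absolutely summable, then all `aₙ = 0`. -/
theorem stmt_4 (lam : ℕ → ℝ) (hpos : ∀ n, 0 < lam n) (hmono : StrictMono lam)
    (a : ℕ → ℝ) (ha : Summable fun n => |a n|) (ε : ℝ) (hε : 0 < ε)
    (h : ∀ t ∈ Set.Ioo (0 : ℝ) ε,
      ∑' n, a n * (1 - Real.exp (-lam n * t)) = 0) :
    ∀ n, a n = 0 := by
  have ha' : Summable (‖a ·‖) := by simpa using ha
  have hIoo : ∀ t ∈ Ioo 0 ε, ∑' n, Real.exp (-lam n * t) • a n = ∑' n, a n := by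
    intro t ht
    have hsum : Summable fun n => Real.exp (-lam n * t) * a n :=
      ha'.of_norm_bounded fun n => norm_exp_neg_mul_smul_le (hpos n).le ht.1.le (a n)
    have := h t ht
    simp_rw [mul_sub, mul_one, mul_comm (a _)] at this
    rw [(summable_abs_iff.mp ha).tsum_sub hsum, sub_eq_zero] at this
    exact this.symm
  have hIoi (t : ℝ) (ht : 0 < t) :=
    tsum_exp_neg_mul_smul_eq_of_eqOn_Ioo (fun n => (hpos n).le) ha' hε hIoo ht
  have hS : ∑' n, a n = 0 := by
    have hlim := tendsto_tsum_exp_neg_mul_smul_atTop (μ := lam) ha' fun n _ => (hpos n).le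
    simp only [fun n => (hpos n).ne', if_false, tsum_zero] at hlim
    exact tendsto_nhds_unique (tendsto_const_nhds.congr' ((eventually_gt_atTop 0).mono
      fun t ht => (hIoi t ht).symm)) hlim
  exact eq_zero_of_tsum_exp_neg_mul_smul_eventually_eq_zero hmono ha'
    ((eventually_gt_atTop 0).mono fun t ht => by rw [hIoi t ht, hS])
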